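/- For all constants C > c > 0 and C' > 0 there is a constant K such that the following holds: for every positive integer t, every real ρ with ρ ≥ 2 and c < t − ρ < C, and every positive integer a with |a − t| ≤ C', we have |x_t(ρ) + a·y_t(ρ) − log(d_a)| ≤ K. -/
import Mathlib


open Filter Real

/-- `d_i = 2^C(i,2) i!`. -/
noncomputable def dI (i : ℕ) : ℝ := 2 ^ i.choose 2 * (i.factorial : ℝ)

/-- `P̃_{ρ,t}`: the set of `(p_1,…,p_t) ∈ [0,1]^t` with `Σ p_i = 1` and `Σ i p_i = ρ`
(index `i : Fin t` denotes size `i+1`). -/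
def Ptilde (ρ : ℝ) (t : ℕ) : Set (Fin t → ℝ) :=
  {q | (∀ i, q i ∈ Set.Icc (0 : ℝ) 1) ∧ (∑ i, q i) = 1 ∧
    (∑ i, ((i.1 + 1 : ℕ) : ℝ) * q i) = ρ}

/-- `L̃(ρ,k,p) = ρ log(ρk) − log k − ρ + 1 − Σ p_i log(p_i d_i)`. -/
noncomputable def Ltilde (ρ k : ℝ) {t : ℕ} (q : Fin t → ℝ) : ℝ :=
  ρ * Real.log (ρ * k) - Real.log k - ρ + 1 -
    ∑ i, q i * Real.log (q i * dI (i.1 + 1))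

/-- `L̃₀(ρ,k,t) = sup {L̃(ρ,k,p) : p ∈ P̃_{ρ,t}}`. -/
noncomputable def Ltilde0 (ρ k : ℝ) (t : ℕ) : ℝ :=
  sSup {L : ℝ | ∃ q ∈ Ptilde ρ t, L = Ltilde ρ k q}

/-- `L̂₀(n,k,t) = L̃₀(n/k, k, t)`. -/
noncomputable def Lhat0 (n k : ℝ) (t : ℕ) : ℝ := Ltilde0 (n / k) k t



lemma dI_pos (n : ℕ) : 0 < dI n := by
  unfold dI; positivity

lemma dI_succ (n : ℕ) : dI (n+1) = dI n * (2^n * ((n:ℝ)+1)) := by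
  unfold dI
  rw [show n+1 = n+1 from rfl, Nat.choose_succ_succ' (n) 1, Nat.choose_one_right,
    Nat.factorial_succ]
  push_cast
  ring

lemma log_dI_succ (n : ℕ) : Real.log (dI (n+1)) =
    Real.log (dI n) + (n:ℝ) * Real.log 2 + Real.log ((n:ℝ)+1) := by
  rw [dI_succ, Real.log_mul (dI_pos n).ne' (by positivity),
    Real.log_mul (by positivity) (by positivity), Real.log_pow]
  ring

lemma geom1 (n : ℕ) : ∑ m ∈ Finset.range n, ((1:ℝ)/2)^m ≤ 2 := by
  have h : ∑ m ∈ Finset.range n, ((1:ℝ)/2)^m = 2 - 2*(1/2)^n := by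
    induction n with
    | zero => simp
    | succ n ih => rw [Finset.sum_range_succ, ih]; ring
  rw [h]; nlinarith [pow_pos (show (0:ℝ) < 1/2 by norm_num) n]

lemma geom2 (n : ℕ) : ∑ m ∈ Finset.range n, ((m:ℝ)+1) * ((1:ℝ)/2)^m ≤ 4 := by
  have h : ∑ m ∈ Finset.range n, ((m:ℝ)+1) * ((1:ℝ)/2)^m = 4 - ((2*n+4))*(1/2)^n := by
    induction n with
    | zero => simp
    | succ n ih => rw [Finset.sum_range_succ, ih]; push_cast; ring
  rw [h]
  nlinarith [pow_pos (show (0:ℝ) < 1/2 by norm_num) n, (show (0:ℝ) ≤ 2*n+4 by positivity)]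

lemma geom2r (n : ℕ) (r : ℝ) (h0 : 0 ≤ r) (h : r ≤ 1/2) :
    ∑ m ∈ Finset.range n, ((m:ℝ)+1) * r^m ≤ 4 := by
  calc ∑ m ∈ Finset.range n, ((m:ℝ)+1) * r^m
      ≤ ∑ m ∈ Finset.range n, ((m:ℝ)+1) * ((1:ℝ)/2)^m := by
        apply Finset.sum_le_sum
        intro i _
        have := pow_le_pow_left₀ h0 h i
        nlinarith [pow_nonneg h0 i, (show (0:ℝ) ≤ (i:ℝ)+1 by positivity)]
    _ ≤ 4 := geom2 n

lemma geom3 (n : ℕ) (r : ℝ) (h0 : 0 ≤ r) (h : r ≤ 1/2) :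
    ∑ m ∈ Finset.range n, (m:ℝ) * r^m ≤ 4*r := by
  cases n with
  | zero => simp; positivity
  | succ n =>
    rw [Finset.sum_range_succ']
    have : ∑ m ∈ Finset.range n, ((m+1:ℕ):ℝ) * r^(m+1)
        = r * ∑ m ∈ Finset.range n, ((m:ℝ)+1) * r^m := by
      rw [Finset.mul_sum]; apply Finset.sum_congr rfl; intro i _; push_cast; ring
    rw [this]
    simp only [Nat.cast_zero, zero_mul, pow_zero, add_zero]
    nlinarith [geom2r n r h0 h]

lemma exp_lem1 (w : ℝ) (m : ℕ) :
    Real.exp (w - ((m:ℝ)-1) * Real.log 2) = 2 * Real.exp w * (1/2)^m := by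
  have h : Real.exp (-Real.log 2) = 1/2 := by
    rw [Real.exp_neg, Real.exp_log two_pos]; norm_num
  rw [show w - ((m:ℝ)-1)*Real.log 2 = (w + Real.log 2) + (m:ℝ) * (-Real.log 2) by ring,
    Real.exp_add, Real.exp_add, Real.exp_log two_pos, Real.exp_nat_mul, h]
  ring

lemma exp_lem2 (w : ℝ) (m : ℕ) :
    Real.exp (w - ((m:ℝ)-2) * Real.log 2) = 4 * Real.exp w * (1/2)^m := by
  have h : Real.exp (-Real.log 2) = 1/2 := by
    rw [Real.exp_neg, Real.exp_log two_pos]; norm_num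
  have h2 : Real.exp (2*Real.log 2) = 4 := by
    rw [show (2:ℝ)*Real.log 2 = Real.log 2 + Real.log 2 by ring, Real.exp_add,
      Real.exp_log two_pos]; norm_num
  rw [show w - ((m:ℝ)-2)*Real.log 2 = (w + 2*Real.log 2) + (m:ℝ) * (-Real.log 2) by ring,
    Real.exp_add, Real.exp_add, h2, Real.exp_nat_mul, h]
  ring

noncomputable def fA (x y : ℝ) (k : ℕ) : ℝ := x + ((k:ℝ)+1)*y - Real.log (dI (k+1))

noncomputable def sA (y : ℝ) (k : ℕ) : ℝ := y - ((k:ℝ)+1)*Real.log 2 - Real.log ((k:ℝ)+2)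

lemma fA_step (x y : ℝ) (k : ℕ) : fA x y (k+1) = fA x y k + sA y k := by
  unfold fA sA
  rw [show k+1+1 = (k+1)+1 from rfl, log_dI_succ (k+1)]
  push_cast
  ring

lemma fA_tel (x y : ℝ) (k m : ℕ) :
    fA x y (k+m) = fA x y k + ∑ j ∈ Finset.range m, sA y (k+j) := by
  induction m with
  | zero => simp
  | succ m ih =>
    rw [Finset.sum_range_succ, show k+(m+1) = (k+m)+1 from rfl, fA_step, ih]
    ring

lemma sA_add (y : ℝ) (k j : ℕ) :
    sA y (k+j) = sA y k - (j:ℝ) * Real.log 2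
      - (Real.log ((k:ℝ)+(j:ℝ)+2) - Real.log ((k:ℝ)+2)) := by
  unfold sA
  push_cast
  ring

lemma sA_le (y : ℝ) (k j : ℕ) (h : k ≤ j) : sA y j ≤ sA y k := by
  unfold sA
  have hkj : (k:ℝ) ≤ (j:ℝ) := by exact_mod_cast h
  have h1 : Real.log ((k:ℝ)+2) ≤ Real.log ((j:ℝ)+2) :=
    Real.log_le_log (by positivity) (by linarith)
  have h2 : ((k:ℝ)+1) * Real.log 2 ≤ ((j:ℝ)+1) * Real.log 2 := by
    have : 0 < Real.log 2 := Real.log_pos (by norm_num)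
    nlinarith
  linarith

lemma log_diff_nonneg (u v : ℝ) (hu : 0 < u) (huv : u ≤ v) :
    0 ≤ Real.log v - Real.log u := by
  have := Real.log_le_log hu huv
  linarith

lemma log_diff_le (u v M : ℝ) (hu : 0 < u) (huv : u ≤ v) (hM : v ≤ M * u) :
    Real.log v - Real.log u ≤ Real.log M := by
  have hM1 : 0 < M := by nlinarith
  have h1 : Real.log v ≤ Real.log (M * u) := Real.log_le_log (by linarith) hM
  rw [Real.log_mul hM1.ne' hu.ne'] at h1
  linarith


lemma spread_up (x y : ℝ) (t ks : ℕ) (hkst : ks < t)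
    (hfks : ∀ j, j < t → fA x y j ≤ fA x y ks) :
    ∀ m : ℕ, ks + m < t → Real.exp (fA x y (ks+m)) ≤ 2 * Real.exp (fA x y ks) * (1/2)^m := by
  set f : ℕ → ℝ := fA x y with hfdef
  set s : ℕ → ℝ := sA y with hsdef
  have hstep : ∀ k, f (k+1) = f k + s k := fun k => fA_step x y k
  have htel : ∀ k m, f (k+m) = f k + ∑ j ∈ Finset.range m, s (k+j) := fun k m => fA_tel x y k m
  have hseq : ∀ k j, s (k+j) = s k - (j:ℝ) * Real.log 2
      - (Real.log ((k:ℝ)+(j:ℝ)+2) - Real.log ((k:ℝ)+2)) := fun k j => sA_add y k j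
  intro m hm
  rcases Nat.eq_zero_or_pos m with rfl | hm1
  · simp; nlinarith [Real.exp_pos (f ks)]
  have hsks : s ks ≤ 0 := by
    have h1 : f (ks+1) ≤ f ks := hfks _ (by omega)
    have := hstep ks
    linarith
  have hsum : ∑ j ∈ Finset.range m, s (ks+j) ≤ -(((m:ℝ)-1) * Real.log 2) := by
    have h1 : ∀ j ∈ Finset.range m, s (ks+j) ≤ -((j:ℝ) * Real.log 2) := by
      intro j _
      have h2 := hseq ks j
      have h3 : 0 ≤ Real.log ((ks:ℝ)+(j:ℝ)+2) - Real.log ((ks:ℝ)+2) :=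
        log_diff_nonneg _ _ (by positivity) (by push_cast; linarith [Nat.cast_nonneg (α := ℝ) j])
      linarith
    calc ∑ j ∈ Finset.range m, s (ks+j) ≤ ∑ j ∈ Finset.range m, -((j:ℝ) * Real.log 2) :=
          Finset.sum_le_sum h1
      _ = -((∑ j ∈ Finset.range m, (j:ℝ)) * Real.log 2) := by
          rw [Finset.sum_neg_distrib, ← Finset.sum_mul]
      _ ≤ -(((m:ℝ)-1) * Real.log 2) := by
          have hlog2 : 0 < Real.log 2 := Real.log_pos (by norm_num)
          have h4 : ((m:ℝ)-1) ≤ ∑ j ∈ Finset.range m, (j:ℝ) := by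
            have h5 : ((m-1:ℕ):ℝ) ≤ ∑ j ∈ Finset.range m, (j:ℝ) :=
              Finset.single_le_sum (fun i _ => Nat.cast_nonneg i) (Finset.mem_range.2 (by omega))
            have : ((m-1:ℕ):ℝ) = (m:ℝ)-1 := by
              have : (1:ℕ) ≤ m := hm1
              push_cast [Nat.cast_sub this]
              ring
            linarith
          nlinarith
  have h6 : f (ks+m) ≤ f ks - ((m:ℝ)-1) * Real.log 2 := by
    have := htel ks m
    linarith
  calc Real.exp (f (ks+m)) ≤ Real.exp (f ks - ((m:ℝ)-1) * Real.log 2) := Real.exp_le_exp.2 h6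
    _ = 2 * Real.exp (f ks) * (1/2)^m := exp_lem1 _ m

lemma spread_down (x y : ℝ) (t ks : ℕ) (hkst : ks < t)
    (hfks : ∀ j, j < t → fA x y j ≤ fA x y ks) :
    ∀ m : ℕ, m ≤ ks → Real.exp (fA x y (ks-m)) ≤ 2 * Real.exp (fA x y ks) * (1/2)^m := by
  set f : ℕ → ℝ := fA x y with hfdef
  set s : ℕ → ℝ := sA y with hsdef
  have hstep : ∀ k, f (k+1) = f k + s k := fun k => fA_step x y k
  have htel : ∀ k m, f (k+m) = f k + ∑ j ∈ Finset.range m, s (k+j) := fun k m => fA_tel x y k m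
  have hseq : ∀ k j, s (k+j) = s k - (j:ℝ) * Real.log 2
      - (Real.log ((k:ℝ)+(j:ℝ)+2) - Real.log ((k:ℝ)+2)) := fun k j => sA_add y k j
  intro m hm
  rcases Nat.eq_zero_or_pos m with rfl | hm1
  · simp; nlinarith [Real.exp_pos (f ks)]
  obtain ⟨n, rfl⟩ : ∃ n, m = n + 1 := ⟨m - 1, by omega⟩
  obtain ⟨p, rfl⟩ : ∃ p, ks = p + (n+1) := ⟨ks - (n+1), by omega⟩
  have hpn : p + (n+1) - (n+1) = p := by omega
  rw [hpn]
  have hsp : 0 ≤ s (p+n) := by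
    have h1 : f (p+n) ≤ f (p+(n+1)) := hfks _ (by omega)
    have h2 := hstep (p+n)
    have h3 : p + n + 1 = p + (n+1) := by omega
    rw [h3] at h2
    linarith
  have hsum : (((n:ℝ)+1)-1) * Real.log 2 ≤ ∑ j ∈ Finset.range (n+1), s (p+j) := by
    have h1 : ∀ j ∈ Finset.range (n+1), ((n:ℝ)-(j:ℝ)) * Real.log 2 ≤ s (p+j) := by
      intro j hj
      have hj' : j ≤ n := by simpa [Nat.lt_succ_iff] using hj
      have e1 := hseq p j
      have e2 := hseq p n
      have h3 : 0 ≤ Real.log ((p:ℝ)+(n:ℝ)+2) - Real.log ((p:ℝ)+(j:ℝ)+2) := by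
        apply log_diff_nonneg _ _ (by positivity)
        have : (j:ℝ) ≤ (n:ℝ) := by exact_mod_cast hj'
        linarith
      linarith [hsp, h3]
    calc (((n:ℝ)+1)-1) * Real.log 2 = ((n:ℝ)-(0:ℝ)) * Real.log 2 := by ring
      _ ≤ ∑ j ∈ Finset.range (n+1), ((n:ℝ)-(j:ℝ)) * Real.log 2 := by
          have h5 : ∀ j ∈ Finset.range (n+1), (0:ℝ) ≤ ((n:ℝ)-(j:ℝ)) * Real.log 2 := by
            intro j hj
            have hj' : j ≤ n := by simpa [Nat.lt_succ_iff] using hj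
            have hlog2 : 0 < Real.log 2 := Real.log_pos (by norm_num)
            have : (j:ℝ) ≤ (n:ℝ) := by exact_mod_cast hj'
            nlinarith
          have h6 := Finset.single_le_sum h5 (Finset.mem_range.2 (show 0 < n+1 by omega))
          simpa using h6
      _ ≤ ∑ j ∈ Finset.range (n+1), s (p+j) := Finset.sum_le_sum h1
  have h7 : f p ≤ f (p+(n+1)) - (((n:ℝ)+1)-1) * Real.log 2 := by
    have := htel p (n+1)
    push_cast at hsum ⊢
    linarith
  calc Real.exp (f p) ≤ Real.exp (f (p+(n+1)) - (((n+1:ℕ):ℝ)-1) * Real.log 2) := by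
        apply Real.exp_le_exp.2
        push_cast
        linarith
    _ = 2 * Real.exp (f (p+(n+1))) * (1/2)^(n+1) := exp_lem1 _ (n+1)


lemma mode_mass (x y : ℝ) (t ks : ℕ) (hkst : ks < t)
    (hfks : ∀ j, j < t → fA x y j ≤ fA x y ks)
    (hg1 : ∑ j ∈ Finset.range t, Real.exp (fA x y j) = 1) :
    1 ≤ 6 * Real.exp (fA x y ks) := by
  set f : ℕ → ℝ := fA x y with hfdef
  have hEpos : ∀ k : ℕ, (0:ℝ) < Real.exp (f k) := fun k => Real.exp_pos _
  have hUp := spread_up x y t ks hkst hfks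
  have hDn := spread_down x y t ks hkst hfks
  have hsplit : ∑ j ∈ Finset.range (ks+1), Real.exp (f j)
      + ∑ j ∈ Finset.Ico (ks+1) t, Real.exp (f j) = 1 := by
    rw [Finset.sum_range_add_sum_Ico _ (show ks+1 ≤ t by omega), hg1]
  have hdown : ∑ j ∈ Finset.range (ks+1), Real.exp (f j) ≤ 4 * Real.exp (f ks) := by
    rw [← Finset.sum_range_reflect]
    have h1 : ∀ m ∈ Finset.range (ks+1), Real.exp (f (ks+1-1-m)) ≤
        2 * Real.exp (f ks) * (1/2)^m := by
      intro m hm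
      have hm' : m ≤ ks := by simpa [Nat.lt_succ_iff] using hm
      have : ks + 1 - 1 - m = ks - m := by omega
      rw [this]
      exact hDn m hm'
    calc ∑ m ∈ Finset.range (ks+1), Real.exp (f (ks+1-1-m))
        ≤ ∑ m ∈ Finset.range (ks+1), 2 * Real.exp (f ks) * (1/2)^m := Finset.sum_le_sum h1
      _ = 2 * Real.exp (f ks) * ∑ m ∈ Finset.range (ks+1), ((1:ℝ)/2)^m := by
          rw [Finset.mul_sum]
      _ ≤ 2 * Real.exp (f ks) * 2 := by
          have := geom1 (ks+1)
          nlinarith [hEpos ks]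
      _ = 4 * Real.exp (f ks) := by ring
  have hup : ∑ j ∈ Finset.Ico (ks+1) t, Real.exp (f j) ≤ 2 * Real.exp (f ks) := by
    rw [Finset.sum_Ico_eq_sum_range]
    have h1 : ∀ i ∈ Finset.range (t - (ks+1)), Real.exp (f (ks+1+i)) ≤
        Real.exp (f ks) * (1/2)^i := by
      intro i hi
      have hi' : i < t - (ks+1) := Finset.mem_range.1 hi
      have h2 : ks + (i+1) < t := by omega
      have h3 := hUp (i+1) h2
      have h4 : ks + 1 + i = ks + (i+1) := by omega
      rw [h4]
      calc Real.exp (f (ks+(i+1))) ≤ 2 * Real.exp (f ks) * (1/2)^(i+1) := h3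
        _ = Real.exp (f ks) * (1/2)^i := by ring
    calc ∑ i ∈ Finset.range (t-(ks+1)), Real.exp (f (ks+1+i))
        ≤ ∑ i ∈ Finset.range (t-(ks+1)), Real.exp (f ks) * (1/2)^i := Finset.sum_le_sum h1
      _ = Real.exp (f ks) * ∑ i ∈ Finset.range (t-(ks+1)), ((1:ℝ)/2)^i := by
          rw [Finset.mul_sum]
      _ ≤ 2 * Real.exp (f ks) := by
          have := geom1 (t-(ks+1))
          nlinarith [hEpos ks]
  linarith

lemma deficiency_eq (x y ρ : ℝ) (t : ℕ)
    (hg1 : ∑ j ∈ Finset.range t, Real.exp (fA x y j) = 1)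
    (hgρ : ∑ j ∈ Finset.range t, ((j:ℝ)+1) * Real.exp (fA x y j) = ρ) :
    ∑ j ∈ Finset.range t, ((t:ℝ) - 1 - (j:ℝ)) * Real.exp (fA x y j) = (t:ℝ) - ρ := by
  have h1 : ∑ j ∈ Finset.range t, ((t:ℝ) - 1 - (j:ℝ)) * Real.exp (fA x y j)
      = (t:ℝ) * ∑ j ∈ Finset.range t, Real.exp (fA x y j)
        - ∑ j ∈ Finset.range t, ((j:ℝ)+1) * Real.exp (fA x y j) := by
    rw [Finset.mul_sum, ← Finset.sum_sub_distrib]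
    apply Finset.sum_congr rfl
    intro j _
    ring
  rw [h1, hg1, hgρ]
  ring

lemma mode_near_top (x y ρ : ℝ) (t ks : ℕ) (hkst : ks < t)
    (hfks : ∀ j, j < t → fA x y j ≤ fA x y ks)
    (hg1 : ∑ j ∈ Finset.range t, Real.exp (fA x y j) = 1)
    (hgρ : ∑ j ∈ Finset.range t, ((j:ℝ)+1) * Real.exp (fA x y j) = ρ) :
    (t:ℝ) - 1 - (ks:ℝ) ≤ ((t:ℝ) - ρ) + 4 := by
  set f : ℕ → ℝ := fA x y with hfdef
  have hEpos : ∀ k : ℕ, (0:ℝ) < Real.exp (f k) := fun k => Real.exp_pos _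
  have hUp := spread_up x y t ks hkst hfks
  have hup : ∑ j ∈ Finset.range t, ((j:ℝ) - (ks:ℝ)) * Real.exp (f j) ≤ 4 := by
    have hsplit : ∑ j ∈ Finset.range t, ((j:ℝ) - (ks:ℝ)) * Real.exp (f j)
        = ∑ j ∈ Finset.range (ks+1), ((j:ℝ) - (ks:ℝ)) * Real.exp (f j)
          + ∑ j ∈ Finset.Ico (ks+1) t, ((j:ℝ) - (ks:ℝ)) * Real.exp (f j) := by
      rw [Finset.sum_range_add_sum_Ico _ (show ks+1 ≤ t by omega)]
    have h2 : ∑ j ∈ Finset.range (ks+1), ((j:ℝ) - (ks:ℝ)) * Real.exp (f j) ≤ 0 := by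
      apply Finset.sum_nonpos
      intro j hj
      have hj' : j ≤ ks := by simpa [Nat.lt_succ_iff] using hj
      have : (j:ℝ) ≤ (ks:ℝ) := by exact_mod_cast hj'
      nlinarith [hEpos j]
    have h3 : ∑ j ∈ Finset.Ico (ks+1) t, ((j:ℝ) - (ks:ℝ)) * Real.exp (f j)
        ≤ 4 * Real.exp (f ks) := by
      rw [Finset.sum_Ico_eq_sum_range]
      have h4 : ∀ i ∈ Finset.range (t-(ks+1)),
          (((ks+1+i:ℕ):ℝ) - (ks:ℝ)) * Real.exp (f (ks+1+i))
            ≤ ((i:ℝ)+1) * (Real.exp (f ks) * (1/2)^i) := by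
        intro i hi
        have hi' : i < t - (ks+1) := Finset.mem_range.1 hi
        have h2' : ks + (i+1) < t := by omega
        have h3' := hUp (i+1) h2'
        have h4' : ks + 1 + i = ks + (i+1) := by omega
        rw [h4']
        have hcast : ((ks + (i+1) : ℕ):ℝ) - (ks:ℝ) = (i:ℝ)+1 := by push_cast; ring
        rw [hcast]
        have hE : Real.exp (f (ks+(i+1))) ≤ Real.exp (f ks) * (1/2)^i := by
          calc Real.exp (f (ks+(i+1))) ≤ 2 * Real.exp (f ks) * (1/2)^(i+1) := h3'
            _ = Real.exp (f ks) * (1/2)^i := by ring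
        have : (0:ℝ) ≤ (i:ℝ)+1 := by positivity
        nlinarith [hEpos (ks+(i+1))]
      calc ∑ i ∈ Finset.range (t-(ks+1)), (((ks+1+i:ℕ):ℝ) - (ks:ℝ)) * Real.exp (f (ks+1+i))
          ≤ ∑ i ∈ Finset.range (t-(ks+1)), ((i:ℝ)+1) * (Real.exp (f ks) * (1/2)^i) :=
            Finset.sum_le_sum h4
        _ = Real.exp (f ks) * ∑ i ∈ Finset.range (t-(ks+1)), ((i:ℝ)+1) * ((1:ℝ)/2)^i := by
            rw [Finset.mul_sum]; apply Finset.sum_congr rfl; intro i _; ring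
        _ ≤ 4 * Real.exp (f ks) := by
            have := geom2 (t-(ks+1))
            nlinarith [hEpos ks]
    have h5 : Real.exp (f ks) ≤ 1 := by
      rw [← hg1]
      exact Finset.single_le_sum (fun i _ => (hEpos i).le) (Finset.mem_range.2 hkst)
    linarith
  have h6 : ∑ j ∈ Finset.range t, ((t:ℝ) - 1 - (j:ℝ)) * Real.exp (f j)
      = ((t:ℝ) - 1 - (ks:ℝ)) * ∑ j ∈ Finset.range t, Real.exp (f j)
        - ∑ j ∈ Finset.range t, ((j:ℝ) - (ks:ℝ)) * Real.exp (f j) := by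
    rw [Finset.mul_sum, ← Finset.sum_sub_distrib]
    apply Finset.sum_congr rfl
    intro j _
    ring
  rw [deficiency_eq x y ρ t hg1 hgρ, hg1] at h6
  linarith


lemma slope_mode (x y ρ : ℝ) (t ks : ℕ) (hkst : ks < t) (hρ2 : 2 ≤ ρ)
    (hfks : ∀ j, j < t → fA x y j ≤ fA x y ks)
    (hg1 : ∑ j ∈ Finset.range t, Real.exp (fA x y j) = 1)
    (hgρ : ∑ j ∈ Finset.range t, ((j:ℝ)+1) * Real.exp (fA x y j) = ρ) :
    -2 ≤ sA y ks := by
  set f : ℕ → ℝ := fA x y with hfdef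
  set s : ℕ → ℝ := sA y with hsdef
  have hstep : ∀ k, f (k+1) = f k + s k := fun k => fA_step x y k
  have htel : ∀ k m, f (k+m) = f k + ∑ j ∈ Finset.range m, s (k+j) := fun k m => fA_tel x y k m
  have hfle : ∀ j, j < t → f j ≤ 0 := by
    intro j hj
    have h1 : Real.exp (f j) ≤ 1 := by
      rw [← hg1]
      exact Finset.single_le_sum (fun i _ => (Real.exp_pos (f i)).le) (Finset.mem_range.2 hj)
    exact Real.exp_le_one_iff.1 h1
  rcases Nat.eq_zero_or_pos ks with hks0 | hks1
  · -- mode at the bottom: use ρ ≥ 2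
    by_contra hcon
    push_neg at hcon
    have hs0 : s 0 < -2 := by rwa [hks0] at hcon
    have hρ1 : ∑ j ∈ Finset.range t, (j:ℝ) * Real.exp (f j) = ρ - 1 := by
      have h1 : ∑ j ∈ Finset.range t, (j:ℝ) * Real.exp (f j)
          = ∑ j ∈ Finset.range t, ((j:ℝ)+1) * Real.exp (f j)
            - ∑ j ∈ Finset.range t, Real.exp (f j) := by
        rw [← Finset.sum_sub_distrib]
        apply Finset.sum_congr rfl
        intro j _
        ring
      rw [h1, hg1, hgρ]
    have hfj : ∀ j, f j ≤ f 0 + (j:ℝ) * s 0 := by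
      intro j
      have h1 := htel 0 j
      simp only [Nat.zero_add, zero_add] at h1
      have h2 : ∑ i ∈ Finset.range j, s i ≤ (j:ℝ) * s 0 := by
        have h3 : ∀ i ∈ Finset.range j, s i ≤ s 0 := by
          intro i _
          exact sA_le y 0 i (Nat.zero_le i)
        calc ∑ i ∈ Finset.range j, s i ≤ ∑ i ∈ Finset.range j, s 0 :=
              Finset.sum_le_sum h3
          _ = (j:ℝ) * s 0 := by rw [Finset.sum_const, Finset.card_range]; simp [nsmul_eq_mul]
      linarith
    set r : ℝ := Real.exp (s 0) with hrdef
    have hrpos : 0 < r := Real.exp_pos _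
    have hrlt : r < Real.exp (-2) := Real.exp_lt_exp.2 hs0
    have hexp2q : Real.exp (-2:ℝ) ≤ 1/4 := by
      have h8 : (4:ℝ) ≤ Real.exp 2 := by
        have h9 : (2:ℝ) ≤ Real.exp 1 := by
          have := Real.add_one_le_exp (1:ℝ)
          linarith
        calc (4:ℝ) = 2 * 2 := by norm_num
          _ ≤ Real.exp 1 * Real.exp 1 := by nlinarith [Real.exp_pos (1:ℝ)]
          _ = Real.exp 2 := by rw [← Real.exp_add]; norm_num
      rw [Real.exp_neg, show (1:ℝ)/4 = 4⁻¹ by norm_num]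
      exact inv_anti₀ (by norm_num) h8
    have hf0 : f 0 ≤ 0 := hfle 0 (by omega)
    have hterm : ∀ j ∈ Finset.range t, (j:ℝ) * Real.exp (f j) ≤ (j:ℝ) * r^j := by
      intro j _
      have h1 : Real.exp (f j) ≤ Real.exp (f 0 + (j:ℝ) * s 0) := Real.exp_le_exp.2 (hfj j)
      have h2 : Real.exp (f 0 + (j:ℝ) * s 0) = Real.exp (f 0) * r^j := by
        rw [Real.exp_add, Real.exp_nat_mul]
      have h3 : Real.exp (f 0) ≤ 1 := Real.exp_le_one_iff.2 hf0
      have h4 : (0:ℝ) ≤ (j:ℝ) := Nat.cast_nonneg j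
      have h5 : (0:ℝ) < r^j := pow_pos hrpos j
      have h6 : Real.exp (f j) ≤ r^j := by nlinarith
      exact mul_le_mul_of_nonneg_left h6 h4
    have hr12 : r ≤ 1/2 := by linarith
    have hfinal : ρ - 1 ≤ 4 * r := by
      rw [← hρ1]
      calc ∑ j ∈ Finset.range t, (j:ℝ) * Real.exp (f j)
          ≤ ∑ j ∈ Finset.range t, (j:ℝ) * r^j := Finset.sum_le_sum hterm
        _ ≤ 4*r := geom3 t r hrpos.le hr12
    linarith
  · -- mode not at the bottom
    obtain ⟨q, rfl⟩ : ∃ q, ks = q + 1 := ⟨ks - 1, by omega⟩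
    have hsq : 0 ≤ s q := by
      have h1 : f q ≤ f (q+1) := hfks _ (by omega)
      have h2 := hstep q
      linarith
    have e1 : s (q+1) = s q - Real.log 2 - (Real.log ((q:ℝ)+3) - Real.log ((q:ℝ)+2)) := by
      rw [hsdef]
      unfold sA
      push_cast
      ring
    have h3 : Real.log ((q:ℝ)+3) - Real.log ((q:ℝ)+2) ≤ Real.log 2 := by
      apply log_diff_le _ _ _ (by positivity) (by linarith [Nat.cast_nonneg (α := ℝ) q])
      have : (0:ℝ) ≤ (q:ℝ) := Nat.cast_nonneg q
      nlinarith
    have hlog2lt : Real.log 2 ≤ 1 := by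
      have := Real.log_le_sub_one_of_pos (show (0:ℝ) < 2 by norm_num)
      linarith
    linarith


lemma lower_f_top (C x y ρ : ℝ) (t ks : ℕ) (hkst : ks < t) (ht3 : 3 ≤ t)
    (hC0 : 0 < C) (hδC : (t:ℝ) - ρ < C) (hρ2 : 2 ≤ ρ)
    (hfks : ∀ j, j < t → fA x y j ≤ fA x y ks)
    (hg1 : ∑ j ∈ Finset.range t, Real.exp (fA x y j) = 1)
    (hgρ : ∑ j ∈ Finset.range t, ((j:ℝ)+1) * Real.exp (fA x y j) = ρ) :
    -(Real.log 6 + (C+5)*(2 + (C+4)*Real.log 2 + Real.log (C+7))) ≤ fA x y (t-1) := by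
  have hlog2 : 0 < Real.log 2 := Real.log_pos (by norm_num)
  set B2 : ℝ := 2 + (C+4)*Real.log 2 + Real.log (C+7) with hB2def
  have hB2pos : 0 < B2 := by
    have h1 : 0 < Real.log (C+7) := Real.log_pos (by linarith)
    have h2 : 0 ≤ (C+4)*Real.log 2 := mul_nonneg (by linarith) hlog2.le
    rw [hB2def]; linarith
  set f : ℕ → ℝ := fA x y with hfdef
  set s : ℕ → ℝ := sA y with hsdef
  have htel : ∀ k m, f (k+m) = f k + ∑ j ∈ Finset.range m, s (k+j) := fun k m => fA_tel x y k m
  have hseq : ∀ k j, s (k+j) = s k - (j:ℝ) * Real.log 2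
      - (Real.log ((k:ℝ)+(j:ℝ)+2) - Real.log ((k:ℝ)+2)) := fun k j => sA_add y k j
  have hC4 : (t:ℝ) - 1 - (ks:ℝ) ≤ C + 4 := by
    have := mode_near_top x y ρ t ks hkst hfks hg1 hgρ
    linarith
  have hD := slope_mode x y ρ t ks hkst hρ2 hfks hg1 hgρ
  have hmode := mode_mass x y t ks hkst hfks hg1
  have hfkslb : -Real.log 6 ≤ f ks := by
    have h1 : Real.exp (-Real.log 6) ≤ Real.exp (f ks) := by
      rw [Real.exp_neg, Real.exp_log (by norm_num : (0:ℝ) < 6)]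
      nlinarith [Real.exp_pos (f ks)]
    exact (Real.exp_le_exp).1 h1
  set m0 : ℕ := t - 1 - ks with hm0def
  have hm0 : ks + m0 = t - 1 := by omega
  have hm0r : (m0:ℝ) = (t:ℝ) - 1 - (ks:ℝ) := by
    rw [hm0def]
    have h1 : ks ≤ t - 1 := by omega
    push_cast [Nat.cast_sub h1, Nat.cast_sub (show 1 ≤ t by omega)]
    ring
  have hm0C : (m0:ℝ) ≤ C + 4 := by rw [hm0r]; exact hC4
  have hterm : ∀ j ∈ Finset.range m0, -B2 ≤ s (ks+j) := by
    intro j hj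
    have hj' : j < m0 := Finset.mem_range.1 hj
    have hjr : (j:ℝ) ≤ C + 3 := by
      have : (j:ℝ) ≤ (m0:ℝ) - 1 := by
        have : (j:ℝ) + 1 ≤ (m0:ℝ) := by exact_mod_cast hj'
        linarith
      linarith
    have hks2 : (2:ℝ) ≤ (ks:ℝ) + 2 := by linarith [Nat.cast_nonneg (α := ℝ) ks]
    have hlogd : Real.log ((ks:ℝ)+(j:ℝ)+2) - Real.log ((ks:ℝ)+2) ≤ Real.log (C+7) := by
      apply log_diff_le _ _ _ (by positivity) (by linarith [Nat.cast_nonneg (α := ℝ) j])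
      nlinarith
    have := hseq ks j
    nlinarith [hD]
  have hsum : -(C+5) * B2 ≤ ∑ j ∈ Finset.range m0, s (ks+j) := by
    have h1 := Finset.card_nsmul_le_sum (Finset.range m0) (fun j => s (ks+j)) (-B2)
      (fun j hj => hterm j hj)
    rw [Finset.card_range, nsmul_eq_mul] at h1
    have h2 : -(C+5) * B2 ≤ (m0:ℝ) * (-B2) := by nlinarith
    linarith
  have h3 := htel ks m0
  rw [hm0] at h3
  have : -Real.log 6 + (-(C+5)*B2) ≤ f (t-1) := by
    rw [h3]
    have := add_le_add hfkslb hsum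
    linarith
  rw [hB2def] at this ⊢
  linarith

lemma upper_s (c x y ρ : ℝ) (t : ℕ) (ht3 : 3 ≤ t) (hc : 0 < c) (hcδ : c < (t:ℝ) - ρ)
    (hg1 : ∑ j ∈ Finset.range t, Real.exp (fA x y j) = 1)
    (hgρ : ∑ j ∈ Finset.range t, ((j:ℝ)+1) * Real.exp (fA x y j) = ρ) :
    sA y (t-2) ≤ max 0 (Real.log (16/c)) := by
  by_cases hcase : sA y (t-2) ≤ 0
  · exact le_trans hcase (le_max_left _ _)
  push_neg at hcase
  set f : ℕ → ℝ := fA x y with hfdef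
  set s : ℕ → ℝ := sA y with hsdef
  have hstep : ∀ k, f (k+1) = f k + s k := fun k => fA_step x y k
  have htel : ∀ k m, f (k+m) = f k + ∑ j ∈ Finset.range m, s (k+j) := fun k m => fA_tel x y k m
  have hseq : ∀ k j, s (k+j) = s k - (j:ℝ) * Real.log 2
      - (Real.log ((k:ℝ)+(j:ℝ)+2) - Real.log ((k:ℝ)+2)) := fun k j => sA_add y k j
  have hfle : ∀ j, j < t → f j ≤ 0 := by
    intro j hj
    have h1 : Real.exp (f j) ≤ 1 := by
      rw [← hg1]
      exact Finset.single_le_sum (fun i _ => (Real.exp_pos (f i)).le) (Finset.mem_range.2 hj)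
    exact Real.exp_le_one_iff.1 h1
  have hDn' : ∀ m : ℕ, 1 ≤ m → m ≤ t-1 →
      Real.exp (f (t-1-m)) ≤ 4 * Real.exp (f (t-2)) * (1/2)^m := by
    intro m hm1 hmt
    obtain ⟨n, rfl⟩ : ∃ n, m = n + 1 := ⟨m - 1, by omega⟩
    set p : ℕ := t - 1 - (n+1) with hpdef
    have hpn : p + n = t - 2 := by omega
    have hspn : 0 ≤ s (p+n) := by rw [hpn]; exact hcase.le
    have hsum : ((n:ℝ)-1) * Real.log 2 ≤ ∑ j ∈ Finset.range n, s (p+j) := by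
      have h1 : ∀ j ∈ Finset.range n, ((n:ℝ)-(j:ℝ)) * Real.log 2 ≤ s (p+j) := by
        intro j hj
        have hj' : j < n := Finset.mem_range.1 hj
        have e1 := hseq p j
        have e2 := hseq p n
        have h3 : 0 ≤ Real.log ((p:ℝ)+(n:ℝ)+2) - Real.log ((p:ℝ)+(j:ℝ)+2) := by
          apply log_diff_nonneg _ _ (by positivity)
          have : (j:ℝ) ≤ (n:ℝ) := by exact_mod_cast hj'.le
          linarith
        linarith [hspn, h3]
      rcases Nat.eq_zero_or_pos n with rfl | hn1
      · simp
        nlinarith [Real.log_pos (show (1:ℝ) < 2 by norm_num)]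
      calc ((n:ℝ)-1) * Real.log 2 ≤ ((n:ℝ)-(0:ℝ)) * Real.log 2 := by
            nlinarith [Real.log_pos (show (1:ℝ) < 2 by norm_num)]
        _ ≤ ∑ j ∈ Finset.range n, ((n:ℝ)-(j:ℝ)) * Real.log 2 := by
            have h5 : ∀ j ∈ Finset.range n, (0:ℝ) ≤ ((n:ℝ)-(j:ℝ)) * Real.log 2 := by
              intro j hj
              have hj' : j < n := Finset.mem_range.1 hj
              have hlog2 : 0 < Real.log 2 := Real.log_pos (by norm_num)
              have : (j:ℝ) ≤ (n:ℝ) := by exact_mod_cast hj'.le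
              nlinarith
            have h6 := Finset.single_le_sum h5 (Finset.mem_range.2 hn1)
            simpa using h6
        _ ≤ ∑ j ∈ Finset.range n, s (p+j) := Finset.sum_le_sum h1
    have h7 : f (t-1-(n+1)) ≤ f (t-2) - (((n+1:ℕ):ℝ)-2) * Real.log 2 := by
      have h8 := htel p n
      rw [hpn] at h8
      push_cast
      have : f p = f (t-1-(n+1)) := by rw [hpdef]
      linarith
    calc Real.exp (f (t-1-(n+1)))
        ≤ Real.exp (f (t-2) - (((n+1:ℕ):ℝ)-2) * Real.log 2) := Real.exp_le_exp.2 h7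
      _ = 4 * Real.exp (f (t-2)) * (1/2)^(n+1) := exp_lem2 _ (n+1)
  -- reflected deficiency sum
  have hrefl : ∑ j ∈ Finset.range t, ((t:ℝ) - 1 - (j:ℝ)) * Real.exp (f j)
      = ∑ m ∈ Finset.range t, (m:ℝ) * Real.exp (f (t-1-m)) := by
    rw [← Finset.sum_range_reflect (fun m => (m:ℝ) * Real.exp (f (t-1-m))) t]
    apply Finset.sum_congr rfl
    intro j hj
    have hj' : j < t := Finset.mem_range.1 hj
    have h1 : t - 1 - (t-1-j) = j := by omega
    rw [h1]
    have h2 : ((t-1-j:ℕ):ℝ) = (t:ℝ) - 1 - (j:ℝ) := by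
      push_cast [Nat.cast_sub (show j ≤ t - 1 by omega), Nat.cast_sub (show 1 ≤ t by omega)]
      ring
    rw [h2]
  have hδ16 : (t:ℝ) - ρ ≤ 16 * Real.exp (f (t-2)) := by
    have h0 := deficiency_eq x y ρ t hg1 hgρ
    rw [hrefl] at h0
    have h1 : ∀ m ∈ Finset.range t, (m:ℝ) * Real.exp (f (t-1-m))
        ≤ (m:ℝ) * (4 * Real.exp (f (t-2)) * (1/2)^m) := by
      intro m hm
      rcases Nat.eq_zero_or_pos m with rfl | hm1
      · simp
      have hm' : m ≤ t - 1 := by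
        have := Finset.mem_range.1 hm
        omega
      exact mul_le_mul_of_nonneg_left (hDn' m hm1 hm') (Nat.cast_nonneg m)
    have h2 : ∑ m ∈ Finset.range t, (m:ℝ) * (4 * Real.exp (f (t-2)) * (1/2)^m)
        = 4 * Real.exp (f (t-2)) * ∑ m ∈ Finset.range t, (m:ℝ) * ((1:ℝ)/2)^m := by
      rw [Finset.mul_sum]
      apply Finset.sum_congr rfl
      intro m _
      ring
    have h3 : ∑ m ∈ Finset.range t, (m:ℝ) * ((1:ℝ)/2)^m ≤ 2 := by
      have := geom3 t (1/2) (by norm_num) (by norm_num)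
      linarith
    have h4 : ∑ m ∈ Finset.range t, (m:ℝ) * Real.exp (f (t-1-m))
        ≤ 8 * Real.exp (f (t-2)) := by
      calc ∑ m ∈ Finset.range t, (m:ℝ) * Real.exp (f (t-1-m))
          ≤ ∑ m ∈ Finset.range t, (m:ℝ) * (4 * Real.exp (f (t-2)) * (1/2)^m) :=
            Finset.sum_le_sum h1
        _ = 4 * Real.exp (f (t-2)) * ∑ m ∈ Finset.range t, (m:ℝ) * ((1:ℝ)/2)^m := h2
        _ ≤ 8 * Real.exp (f (t-2)) := by nlinarith [Real.exp_pos (f (t-2))]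
    nlinarith [Real.exp_pos (f (t-2))]
  have hflb : Real.log (c/16) ≤ f (t-2) := by
    have h1 : Real.exp (Real.log (c/16)) ≤ Real.exp (f (t-2)) := by
      rw [Real.exp_log (by positivity)]
      nlinarith
    exact Real.exp_le_exp.1 h1
  have hfub : f (t-1) ≤ 0 := hfle (t-1) (by omega)
  have hs' : s (t-2) = f (t-1) - f (t-2) := by
    have h1 := hstep (t-2)
    have h2 : t - 2 + 1 = t - 1 := by omega
    rw [h2] at h1
    linarith
  have hlogc : Real.log (c/16) = -Real.log (16/c) := by
    rw [Real.log_div hc.ne' (by norm_num), Real.log_div (by norm_num) hc.ne']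
    ring
  have : s (t-2) ≤ Real.log (16/c) := by
    rw [hs']
    rw [hlogc] at hflb
    linarith
  exact le_trans this (le_max_right _ _)


set_option maxHeartbeats 1000000 in
lemma final_est (C' x y K1 B B3 : ℝ) (t a : ℕ) (ht3 : 3 ≤ t) (ha : 0 < a)
    (hC' : 0 < C') (hK1pos : 0 < K1) (hB0 : 0 ≤ B) (hBK1 : K1 ≤ B)
    (hB3def : B3 = B + (C'+1)*Real.log 2 + Real.log (C'+2))
    (haC' : |(a : ℝ) - (t : ℝ)| ≤ C')
    (hflb : -K1 ≤ fA x y (t-1)) (hfub : fA x y (t-1) ≤ 0)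
    (hsub : sA y (t-2) ≤ B) (hslb : -B ≤ sA y (t-2)) :
    |x + (a:ℝ)*y - Real.log (dI a)| ≤ K1 + (C'+1)*B3 := by
  have hlog2 : 0 < Real.log 2 := Real.log_pos (by norm_num)
  have hB3pos : 0 < B3 := by
    have h1 : 0 < Real.log (C'+2) := Real.log_pos (by linarith)
    have h2 : 0 < (C'+1)*Real.log 2 := mul_pos (by linarith) hlog2
    rw [hB3def]; linarith
  set f : ℕ → ℝ := fA x y with hfdef
  set s : ℕ → ℝ := sA y with hsdef
  have hstep : ∀ k, f (k+1) = f k + s k := fun k => fA_step x y k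
  have htel : ∀ k m, f (k+m) = f k + ∑ j ∈ Finset.range m, s (k+j) := fun k m => fA_tel x y k m
  have hseq : ∀ k j, s (k+j) = s k - (j:ℝ) * Real.log 2
      - (Real.log ((k:ℝ)+(j:ℝ)+2) - Real.log ((k:ℝ)+2)) := fun k j => sA_add y k j
  -- bound on nearby slopes
  have hsbound : ∀ k : ℕ, k ≤ t - 2 + (t - 2 - k) → True := fun _ _ => trivial
  have habs : ∀ k : ℕ, ((t:ℝ) - 2 - (k:ℝ)) ≤ C' → ((k:ℝ) - ((t:ℝ)-2)) ≤ C' →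
      (k ≥ t - 2 ∨ k ≤ t - 2) → |s k| ≤ B3 := by
    intro k hk1 hk2 _
    rcases le_or_gt (t-2) k with hge | hlt
    · -- k ≥ t-2 : s k = s (t-2) - d log2 - L
      obtain ⟨d, rfl⟩ : ∃ d, k = (t-2) + d := ⟨k - (t-2), by omega⟩
      have e1 := hseq (t-2) d
      have hdC : (d:ℝ) ≤ C' := by
        have hcast : ((t-2:ℕ):ℝ) = (t:ℝ) - 2 := by
          push_cast [Nat.cast_sub (show 2 ≤ t by omega)]; ring
        have : ((t-2+d:ℕ):ℝ) = (t:ℝ) - 2 + d := by push_cast [hcast]; ring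
        rw [this] at hk2
        linarith
      have hd0 : (0:ℝ) ≤ (d:ℝ) := Nat.cast_nonneg d
      have hcast : ((t-2:ℕ):ℝ) = (t:ℝ) - 2 := by
        push_cast [Nat.cast_sub (show 2 ≤ t by omega)]; ring
      rw [hcast] at e1
      have ht0 : (3:ℝ) ≤ (t:ℝ) := by exact_mod_cast ht3
      have hL0 : 0 ≤ Real.log ((t:ℝ)-2+(d:ℝ)+2) - Real.log ((t:ℝ)-2+2) :=
        log_diff_nonneg _ _ (by linarith) (by linarith)
      have hL1 : Real.log ((t:ℝ)-2+(d:ℝ)+2) - Real.log ((t:ℝ)-2+2) ≤ Real.log (C'+2) := by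
        apply log_diff_le _ _ _ (by linarith) (by linarith)
        nlinarith
      have hd2 : 0 ≤ (d:ℝ) * Real.log 2 := by positivity
      have hd3 : (d:ℝ) * Real.log 2 ≤ C' * Real.log 2 := by nlinarith
      rw [abs_le]
      constructor
      · rw [hB3def]; nlinarith
      · rw [hB3def]; nlinarith
    · -- k < t-2
      obtain ⟨d, hd⟩ : ∃ d, t - 2 = k + d := ⟨t - 2 - k, by omega⟩
      have e1 := hseq k d
      rw [← hd] at e1
      have hdC : (d:ℝ) ≤ C' := by
        have h5 : (d:ℝ) = ((t-2:ℕ):ℝ) - (k:ℝ) := by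
          have : ((k+d:ℕ):ℝ) = (k:ℝ) + d := by push_cast; ring
          rw [← hd] at this
          linarith [this]
        have hcast : ((t-2:ℕ):ℝ) = (t:ℝ) - 2 := by
          push_cast [Nat.cast_sub (show 2 ≤ t by omega)]; ring
        rw [hcast] at h5
        linarith
      have hd0 : (0:ℝ) ≤ (d:ℝ) := Nat.cast_nonneg d
      have hk0 : (0:ℝ) ≤ (k:ℝ) := Nat.cast_nonneg k
      have hL0 : 0 ≤ Real.log ((k:ℝ)+(d:ℝ)+2) - Real.log ((k:ℝ)+2) :=
        log_diff_nonneg _ _ (by linarith) (by linarith)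
      have hL1 : Real.log ((k:ℝ)+(d:ℝ)+2) - Real.log ((k:ℝ)+2) ≤ Real.log (C'+2) := by
        apply log_diff_le _ _ _ (by linarith) (by linarith)
        nlinarith
      have hd2 : 0 ≤ (d:ℝ) * Real.log 2 := by positivity
      have hd3 : (d:ℝ) * Real.log 2 ≤ C' * Real.log 2 := by nlinarith
      rw [abs_le]
      constructor
      · rw [hB3def]; nlinarith
      · rw [hB3def]; nlinarith
  -- the goal
  have hgoal : x + (a:ℝ)*y - Real.log (dI a) = f (a-1) := by
    rw [hfdef]
    unfold fA
    rw [show (a-1)+1 = a from by omega]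
    push_cast [Nat.cast_sub (show 1 ≤ a from ha)]
    ring
  rw [hgoal]
  rcases le_or_gt t a with hta | hat
  · -- a ≥ t
    set m1 : ℕ := a - t with hm1def
    have hm1 : (t-1) + m1 = a - 1 := by omega
    have hm1C : (m1:ℝ) ≤ C' := by
      have h1 : (m1:ℝ) = (a:ℝ) - t := by
        rw [hm1def]; push_cast [Nat.cast_sub hta]; ring
      have h2 : (a:ℝ) - t ≤ C' := le_trans (le_abs_self _) haC'
      linarith
    have h3 := htel (t-1) m1
    rw [hm1] at h3
    have h4 : |∑ j ∈ Finset.range m1, s ((t-1)+j)| ≤ (m1:ℝ) * B3 := by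
      calc |∑ j ∈ Finset.range m1, s ((t-1)+j)|
          ≤ ∑ j ∈ Finset.range m1, |s ((t-1)+j)| := Finset.abs_sum_le_sum_abs _ _
        _ ≤ (m1:ℝ) * B3 := by
            have h5 : ∀ j ∈ Finset.range m1, |s ((t-1)+j)| ≤ B3 := by
              intro j hj
              have hj' : j < m1 := Finset.mem_range.1 hj
              apply habs
              · have : ((t-1+j:ℕ):ℝ) = (t:ℝ) - 1 + j := by
                  push_cast [Nat.cast_sub (show 1 ≤ t by omega)]; ring
                rw [this]
                linarith [Nat.cast_nonneg (α := ℝ) j]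
              · have : ((t-1+j:ℕ):ℝ) = (t:ℝ) - 1 + j := by
                  push_cast [Nat.cast_sub (show 1 ≤ t by omega)]; ring
                rw [this]
                have hj2 : (j:ℝ) + 1 ≤ (m1:ℝ) := by exact_mod_cast hj'
                linarith
              · omega
            have h6 := Finset.sum_le_card_nsmul (Finset.range m1)
              (fun j => |s ((t-1)+j)|) B3 h5
            rw [Finset.card_range, nsmul_eq_mul] at h6
            exact h6
    have h7 : |f (a-1)| ≤ |f (t-1)| + (m1:ℝ) * B3 := by
      rw [h3]
      calc |f (t-1) + ∑ j ∈ Finset.range m1, s ((t-1)+j)|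
          ≤ |f (t-1)| + |∑ j ∈ Finset.range m1, s ((t-1)+j)| := abs_add_le _ _
        _ ≤ |f (t-1)| + (m1:ℝ) * B3 := by linarith
    have h8 : |f (t-1)| ≤ K1 := abs_le.2 ⟨by linarith, by linarith⟩
    have h9 : (m1:ℝ) * B3 ≤ (C'+1) * B3 := by nlinarith
    linarith
  · -- a < t
    set m2 : ℕ := t - a with hm2def
    have hm2 : (a-1) + m2 = t - 1 := by omega
    have hm2C : (m2:ℝ) ≤ C' := by
      have h1 : (m2:ℝ) = (t:ℝ) - a := by
        rw [hm2def]; push_cast [Nat.cast_sub hat.le]; ring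
      have h2 : (t:ℝ) - a ≤ C' := by
        have := neg_abs_le ((a:ℝ) - (t:ℝ))
        linarith [haC']
      linarith
    have h3 := htel (a-1) m2
    rw [hm2] at h3
    have h4 : |∑ j ∈ Finset.range m2, s ((a-1)+j)| ≤ (m2:ℝ) * B3 := by
      calc |∑ j ∈ Finset.range m2, s ((a-1)+j)|
          ≤ ∑ j ∈ Finset.range m2, |s ((a-1)+j)| := Finset.abs_sum_le_sum_abs _ _
        _ ≤ (m2:ℝ) * B3 := by
            have h5 : ∀ j ∈ Finset.range m2, |s ((a-1)+j)| ≤ B3 := by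
              intro j hj
              have hj' : j < m2 := Finset.mem_range.1 hj
              apply habs
              · have : ((a-1+j:ℕ):ℝ) = (a:ℝ) - 1 + j := by
                  push_cast [Nat.cast_sub (show 1 ≤ a from ha)]; ring
                rw [this]
                have hj2 : (j:ℝ) + 1 ≤ (m2:ℝ) := by exact_mod_cast hj'
                have h1 : (m2:ℝ) = (t:ℝ) - a := by
                  rw [hm2def]; push_cast [Nat.cast_sub hat.le]; ring
                linarith
              · have : ((a-1+j:ℕ):ℝ) = (a:ℝ) - 1 + j := by
                  push_cast [Nat.cast_sub (show 1 ≤ a from ha)]; ring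
                rw [this]
                have hj2 : (j:ℝ) + 1 ≤ (m2:ℝ) := by exact_mod_cast hj'
                have h1 : (m2:ℝ) = (t:ℝ) - a := by
                  rw [hm2def]; push_cast [Nat.cast_sub hat.le]; ring
                linarith
              · omega
            have h6 := Finset.sum_le_card_nsmul (Finset.range m2)
              (fun j => |s ((a-1)+j)|) B3 h5
            rw [Finset.card_range, nsmul_eq_mul] at h6
            exact h6
    have h7 : |f (a-1)| ≤ |f (t-1)| + (m2:ℝ) * B3 := by
      have : f (a-1) = f (t-1) - ∑ j ∈ Finset.range m2, s ((a-1)+j) := by linarith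
      rw [this]
      calc |f (t-1) - ∑ j ∈ Finset.range m2, s ((a-1)+j)|
          ≤ |f (t-1)| + |∑ j ∈ Finset.range m2, s ((a-1)+j)| := abs_sub (f (t-1)) _
        _ ≤ |f (t-1)| + (m2:ℝ) * B3 := by linarith
    have h8 : |f (t-1)| ≤ K1 := abs_le.2 ⟨by linarith, by linarith⟩
    have h9 : (m2:ℝ) * B3 ≤ (C'+1) * B3 := by nlinarith
    linarith


set_option maxHeartbeats 1000000 in
/-- For all constants `C > c > 0` and `C' > 0` there is a constant `K` such
that for every positive integer `t`, every real `ρ ≥ 2` with `c < t − ρ < C`, and every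
positive integer `a` with `|a − t| ≤ C'`, the solutions `x = x_t(ρ)`, `y = y_t(ρ)` satisfy
`|x + a y − log d_a| ≤ K`. -/
theorem x_plus_ay_estimate (C c C' : ℝ) (hc : 0 < c) (hcC : c < C) (hC' : 0 < C') :
    ∃ K : ℝ, ∀ t : ℕ, 0 < t → ∀ ρ x y : ℝ, 2 ≤ ρ →
      c < (t : ℝ) - ρ → (t : ℝ) - ρ < C →
      (∑ i : Fin t, Real.exp (x + ((i.1 + 1 : ℕ) : ℝ) * y) / dI (i.1 + 1)) = 1 →
      (∑ i : Fin t, ((i.1 + 1 : ℕ) : ℝ) *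
          Real.exp (x + ((i.1 + 1 : ℕ) : ℝ) * y) / dI (i.1 + 1)) = ρ →
      ∀ a : ℕ, 0 < a → |(a : ℝ) - (t : ℝ)| ≤ C' →
      |x + (a : ℝ) * y - Real.log (dI a)| ≤ K := by
  have hlog2 : 0 < Real.log 2 := Real.log_pos (by norm_num)
  set K1 : ℝ := Real.log 6 + (C+5)*(2 + (C+4)*Real.log 2 + Real.log (C+7)) with hK1def
  have hK1pos : 0 < K1 := by
    have h1 : 0 < Real.log (C+7) := Real.log_pos (by linarith)
    have h2 : 0 ≤ (C+4)*Real.log 2 := mul_nonneg (by linarith) hlog2.le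
    have h3 : 0 < Real.log 6 := Real.log_pos (by norm_num)
    have h4 : 0 < (C+5)*(2 + (C+4)*Real.log 2 + Real.log (C+7)) :=
      mul_pos (by linarith) (by linarith)
    rw [hK1def]; linarith
  set B : ℝ := max K1 (max 0 (Real.log (16/c))) with hBdef
  have hBK1 : K1 ≤ B := le_max_left _ _
  have hB0 : 0 ≤ B := le_trans (le_max_left 0 _) (le_max_right _ _)
  set B3 : ℝ := B + (C'+1)*Real.log 2 + Real.log (C'+2) with hB3def
  have hB3pos : 0 < B3 := by
    have h1 : 0 < Real.log (C'+2) := Real.log_pos (by linarith)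
    have h2 : 0 < (C'+1)*Real.log 2 := mul_pos (by linarith) hlog2
    rw [hB3def]; linarith
  refine ⟨K1 + (C'+1)*B3, ?_⟩
  intro t ht ρ x y hρ2 hcδ hδC hsum1 hsumρ a ha haC'
  have hρt : ρ < (t:ℝ) := by linarith
  have ht3 : 3 ≤ t := by
    have : (2:ℝ) < (t:ℝ) := by linarith
    exact_mod_cast Nat.succ_le_of_lt (by exact_mod_cast this)
  set f : ℕ → ℝ := fA x y with hfdef
  set s : ℕ → ℝ := sA y with hsdef
  have hstep : ∀ k, f (k+1) = f k + s k := fun k => fA_step x y k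
  have htel : ∀ k m, f (k+m) = f k + ∑ j ∈ Finset.range m, s (k+j) := fun k m => fA_tel x y k m
  have hseq : ∀ k j, s (k+j) = s k - (j:ℝ) * Real.log 2
      - (Real.log ((k:ℝ)+(j:ℝ)+2) - Real.log ((k:ℝ)+2)) := fun k j => sA_add y k j
  have hconv : ∀ k : ℕ, Real.exp (x + (((k+1):ℕ):ℝ) * y) / dI (k+1) = Real.exp (f k) := by
    intro k
    rw [hfdef]
    unfold fA
    rw [Real.exp_sub, Real.exp_log (dI_pos (k+1))]
    push_cast
    ring_nf
  have hg1 : ∑ j ∈ Finset.range t, Real.exp (f j) = 1 := by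
    rw [← hsum1, Fin.sum_univ_eq_sum_range (fun i => Real.exp (x + ((i + 1 : ℕ) : ℝ) * y) / dI (i + 1))]
    exact Finset.sum_congr rfl (fun j _ => (hconv j).symm)
  have hgρ : ∑ j ∈ Finset.range t, ((j:ℝ)+1) * Real.exp (f j) = ρ := by
    rw [← hsumρ, Fin.sum_univ_eq_sum_range
      (fun i => ((i + 1 : ℕ) : ℝ) * Real.exp (x + ((i + 1 : ℕ) : ℝ) * y) / dI (i + 1))]
    apply Finset.sum_congr rfl
    intro j _
    rw [mul_div_assoc, hconv j]
    push_cast; ring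
  have hfle : ∀ j, j < t → f j ≤ 0 := by
    intro j hj
    have h1 : Real.exp (f j) ≤ 1 := by
      rw [← hg1]
      exact Finset.single_le_sum (fun i _ => (Real.exp_pos (f i)).le) (Finset.mem_range.2 hj)
    exact Real.exp_le_one_iff.1 h1
  -- the mode
  obtain ⟨ks, hksmem, hksmax⟩ := Finset.exists_max_image (Finset.range t) f
    ⟨0, Finset.mem_range.2 (by omega)⟩
  have hkst : ks < t := Finset.mem_range.1 hksmem
  have hfks : ∀ j, j < t → f j ≤ f ks := fun j hj => hksmax j (Finset.mem_range.2 hj)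
  -- key bounds
  have hflb : -K1 ≤ f (t-1) := by
    rw [hK1def]
    exact lower_f_top C x y ρ t ks hkst ht3 (by linarith) hδC hρ2 hfks hg1 hgρ
  have hfub : f (t-1) ≤ 0 := hfle (t-1) (by omega)
  have hsub : s (t-2) ≤ B := by
    have := upper_s c x y ρ t ht3 hc hcδ hg1 hgρ
    rw [hBdef]
    exact le_trans this (le_max_right _ _)
  have hslb : -B ≤ s (t-2) := by
    have h1 := hstep (t-2)
    have h2 : t - 2 + 1 = t - 1 := by omega
    rw [h2] at h1
    have h3 : f (t-2) ≤ 0 := hfle (t-2) (by omega)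
    have : -K1 ≤ s (t-2) := by linarith
    linarith
  have := final_est C' x y K1 B B3 t a ht3 ha hC' hK1pos hB0 hBK1 hB3def haC' hflb hfub hsub hslb
  exact this
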